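/- Let G, H, K be finite groups. For a left-free (G,H)-biset X define ρ(X) := Σ_{(U,α,V) ∈ E_{G,H}} (|X^{⊲(U,α,V)}| / |C_G(U)|) · (U,α,V) ∈ ℚA(G,H) (each integer |X^{⊲(U,α,V)}| is divisible by |C_G(U)|, and ρ(X) is fixed by the G×H-action). Then for every left-free (G,H)-biset X and every left-free (H,K)-biset Y one has ρ(X ×_H Y) = ρ(X) ·_H ρ(Y). -/

import Mathlib

/-!
Divisibility: `C_G(U)` acts freely on `X^{⊲(U,α,V)}` through the left `G`-action, because
`(c, 1)` commutes with the graph `⊲(U,α,V)`. Invariance: `(g,h)` maps the fixed points of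
`⊲(U,α,V)` bijectively onto those of its conjugate, whose first projection is `ᵍU`.

Multiplicativity: a class `[x,y]` of `X ×_H Y` is fixed by `(γ w, w)` iff some `h` has
`(γ w, h) x = x` and `(h, w) y = y`. Since `Y` is left-free this `h` is unique, so it is `β w`
for a homomorphism `β : W → H`, and the fixed pairs split as a disjoint union over `β`. As `H`
acts freely on `X × Y`, each fixed class has `|H|` preimages, whence
`|H| · |(X ×_H Y)^{⊲(U,γ,W)}| = Σ_β |X^{(γ,β)}| · |Y^{⊲(β(W),β,W)}|`. In the ghost product only
`V = β(W)` contributes, with the unique `α` such that `γ = α ∘ β`; such an `α` exists as soon as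
`X^{(γ,β)}` is nonempty, since `X` is left-free, and the factors `|C_H(β(W))|` cancel.
Here `X^{(γ,β)}` is the set of points fixed by every `(γ w, β w)`.
-/

open scoped Classical

/-- The set `E_{G,H}` of triples `(U,α,V)` with `V ≤ H`, `U ≤ G` and
`α : V → U` a surjective homomorphism, encoded as pairs of a subgroup `V ≤ H`
and a homomorphism `α : ↥V →* G` (so that `U = α.range`). -/
abbrev TriE (G H : Type*) [Group G] [Group H] := (V : Subgroup H) × (↥V →* G)

/-- The graph subgroup `⊲(U,α,V) = {(α v, v) : v ∈ V} ≤ G × H` of a triple.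
Triples are `G × H`-conjugate iff their graphs are conjugate. -/
def lhdOf {G H : Type*} [Group G] [Group H] (t : TriE G H) : Subgroup (G × H) :=
  (t.2.prod t.1.subtype).range

/-- The ghost-algebra product `ℚA(G,H) × ℚA(H,K) → ℚA(G,K)`, given on basis
elements by `(U,α,V)·(V',β,W) = 0` if `V ≠ V'` and by
`(|C_H(V)|/|H|)·(U,α∘β,W)` if `V = V'`; elements of `ℚA` are represented by
their coefficient functions on the basis `TriE`. -/
noncomputable def ghostMul {G H K : Type*} [Group G] [Group H] [Group K]
    (a : TriE G H → ℚ) (b : TriE H K → ℚ) : TriE G K → ℚ :=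
  fun r => ∑ᶠ (s : TriE G H), ∑ᶠ (t : TriE H K),
    if h : t.2.range = s.1 then
      (if r = ⟨t.1, s.2.comp (t.2.codRestrict s.1
            (fun w => h ▸ MonoidHom.mem_range.mpr ⟨w, rfl⟩))⟩ then
        ((Nat.card ↥(Subgroup.centralizer ((s.1 : Subgroup H) : Set H)) : ℚ) /
          (Nat.card H : ℚ)) * a s * b t
      else 0)
    else 0

/-- The orbit sum `[U,α,V]⁺` (sum of the `G × H`-conjugates of the basis
element `(U,α,V)`), as a coefficient function: the indicator function of the
conjugation orbit of the triple `t`, detected via graphs. -/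
noncomputable def orbSum {G H : Type*} [Group G] [Group H] (t : TriE G H) :
    TriE G H → ℚ :=
  fun s => if ∃ a : G × H,
    Subgroup.map (MulAut.conj a).toMonoidHom (lhdOf t) = lhdOf s then 1 else 0

/-- The `H`-orbit relation on `X × Y` whose quotient is the tensor product
`X ×_H Y` of a `(G,H)`-biset `X` and an `(H,K)`-biset `Y`
(`h • (x,y) = (x h⁻¹, h y)`, i.e. `((1,h) • x, (h,1) • y)`). -/
def tensSetoid (G H K X Y : Type*) [Group G] [Group H] [Group K]
    [MulAction (G × H) X] [MulAction (H × K) Y] : Setoid (X × Y) where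
  r a b := ∃ h : H, ((((1 : G), h) : G × H) • a.1, ((h, (1 : K)) : H × K) • a.2) = b
  iseqv := by
    constructor
    · intro a; exact ⟨1, by simp [Prod.mk_one_one]⟩
    · rintro a b ⟨h, rfl⟩
      exact ⟨h⁻¹, by simp [smul_smul, Prod.mk_one_one]⟩
    · rintro a b c ⟨h, rfl⟩ ⟨h', rfl⟩
      exact ⟨h' * h, by simp [smul_smul]⟩

/-- The mark homomorphism `ρ_{G,H}` of a left-free `(G,H)`-biset `X`, as a
coefficient function on `TriE G H`:
`ρ(X)(U,α,V) = |X^{⊲(U,α,V)}| / |C_G(U)|`. -/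
noncomputable def rhoFun (G H : Type*) [Group G] [Group H]
    (X : Type*) [MulAction (G × H) X] : TriE G H → ℚ :=
  fun t => (Nat.card {x : X | ∀ v : ↥t.1, ((t.2 v, (v : H)) : G × H) • x = x} : ℚ) /
    (Nat.card ↥(Subgroup.centralizer ((t.2.range : Subgroup G) : Set G)) : ℚ)

/-- The mark homomorphism of the tensor product biset `X ×_H Y`, realized as
the quotient of `X × Y` by `tensSetoid`, with `(g,k)` acting on classes by
`[x,y] ↦ [(g,1) • x, (1,k) • y]`. -/
noncomputable def rhoProd (G H K : Type*) [Group G] [Group H] [Group K]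
    (X Y : Type*) [MulAction (G × H) X] [MulAction (H × K) Y] : TriE G K → ℚ :=
  fun t => (Nat.card {q : Quotient (tensSetoid G H K X Y) |
      ∀ (w : ↥t.1) (x : X) (y : Y), Quotient.mk (tensSetoid G H K X Y) (x, y) = q →
        Quotient.mk (tensSetoid G H K X Y)
          (((t.2 w, (1 : H)) : G × H) • x, (((1 : H), (w : K)) : H × K) • y) = q} : ℚ) /
    (Nat.card ↥(Subgroup.centralizer ((t.2.range : Subgroup G) : Set G)) : ℚ)

instance MonoidHom.finite {A B : Type*} [Group A] [Group B] [Finite A] [Finite B] :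
    Finite (A →* B) :=
  Finite.of_injective _ DFunLike.coe_injective

section FreeAction

variable {A Z : Type*} [Group A] [MulAction A Z]

theorem card_preimage_mk_of_free [Finite A] [Finite Z]
    (hfree : ∀ (a : A) (z : Z), a • z = z → a = 1) {s : Setoid Z}
    (hs : s = MulAction.orbitRel A Z) (S : Set (Quotient s)) :
    Nat.card {z : Z | Quotient.mk s z ∈ S} = Nat.card S * Nat.card A := by
  subst hs
  have fiber (q : MulAction.orbitRel.Quotient A Z) :
      A ≃ {z : Z // (Quotient.mk _ z : MulAction.orbitRel.Quotient A Z) = q} := by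
    refine Equiv.ofBijective (fun a => ⟨a • q.out, ?_⟩) ⟨fun a b hab => ?_, fun z => ?_⟩
    · exact (Quotient.sound (MulAction.mem_orbit q.out a)).trans (Quotient.out_eq q)
    · have hab' : a • q.out = b • q.out := congrArg Subtype.val hab
      have h : (b⁻¹ * a) • q.out = q.out := by rw [mul_smul, hab', inv_smul_smul]
      exact (inv_mul_eq_one.mp (hfree _ _ h)).symm
    · obtain ⟨a, ha⟩ := MulAction.mem_orbit_iff.mp
        (Quotient.exact (z.2.trans (Quotient.out_eq q).symm) : z.1 ∈ MulAction.orbit A q.out)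
      exact ⟨a, Subtype.ext ha⟩
  have := Fintype.ofFinite S
  calc Nat.card {z : Z | (Quotient.mk _ z : MulAction.orbitRel.Quotient A Z) ∈ S}
      = Nat.card (Σ q : S, {z : Z // (Quotient.mk _ z : MulAction.orbitRel.Quotient A Z) = q}) :=
        Nat.card_congr (Equiv.sigmaSubtypeFiberEquivSubtype (Quotient.mk _) fun _ => Iff.rfl).symm
    _ = ∑ _ : S, Nat.card A := by
        rw [Nat.card_sigma]
        exact Finset.sum_congr rfl fun q _ => (Nat.card_congr (fiber q)).symm
    _ = Nat.card S * Nat.card A := by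
        rw [Finset.sum_const, Finset.card_univ, smul_eq_mul, ← Nat.card_eq_fintype_card]

theorem card_dvd_card_of_free [Finite A] [Finite Z]
    (hfree : ∀ (a : A) (z : Z), a • z = z → a = 1) {F : Set Z}
    (hF : ∀ a : A, ∀ z ∈ F, a • z ∈ F) :
    Nat.card A ∣ Nat.card F := by
  have hpre : {z : Z | (Quotient.mk _ z : MulAction.orbitRel.Quotient A Z) ∈
      Quotient.mk _ '' F} = F := by
    ext z
    refine ⟨fun ⟨z', hz', hzz'⟩ => ?_, fun hz => ⟨z, hz, rfl⟩⟩
    obtain ⟨a, rfl⟩ := MulAction.mem_orbit_iff.mp (Quotient.exact hzz'.symm)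
    exact hF a z' hz'
  rw [← hpre, card_preimage_mk_of_free hfree rfl]
  exact dvd_mul_left _ _

end FreeAction

section Conjugation

variable {A Z : Type*} [Group A] [MulAction A Z]

theorem card_fixed_map_conj (L : Subgroup A) (a : A) :
    Nat.card {z : Z | ∀ p ∈ L.map (MulAut.conj a).toMonoidHom, p • z = z} =
      Nat.card {z : Z | ∀ p ∈ L, p • z = z} := by
  have mem_map (p : A) : p ∈ L.map (MulAut.conj a).toMonoidHom ↔ a⁻¹ * p * a ∈ L := by
    rw [Subgroup.mem_map_equiv]
    simp [MulAut.conj_symm_apply]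
  refine Nat.card_congr
    { toFun := fun z => ⟨a⁻¹ • z.1, fun p hp => ?_⟩
      invFun := fun z => ⟨a • z.1, fun p hp => ?_⟩
      left_inv := fun z => Subtype.ext (smul_inv_smul a z.1)
      right_inv := fun z => Subtype.ext (inv_smul_smul a z.1) }
  · have := z.2 _ ((mem_map (a * p * a⁻¹)).mpr (by simpa [mul_assoc] using hp))
    calc p • a⁻¹ • z.1 = a⁻¹ • (a * p * a⁻¹) • z.1 := by
          rw [smul_smul, smul_smul]; congr 1; group
      _ = a⁻¹ • z.1 := by rw [this]
  · calc p • a • z.1 = a • (a⁻¹ * p * a) • z.1 := by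
          rw [smul_smul, smul_smul]; congr 1; group
      _ = a • z.1 := by rw [z.2 _ ((mem_map p).mp hp)]

end Conjugation

theorem Subgroup.card_centralizer_map_conj {G : Type*} [Group G] (U : Subgroup G) (g : G) :
    Nat.card (Subgroup.centralizer (U.map (MulAut.conj g).toMonoidHom : Set G)) =
      Nat.card (Subgroup.centralizer (U : Set G)) := by
  have : Subgroup.centralizer (U.map (MulAut.conj g).toMonoidHom : Set G) =
      (Subgroup.centralizer (U : Set G)).map (MulAut.conj g).toMonoidHom := by
    ext c
    simp only [Subgroup.mem_map_equiv, Subgroup.mem_centralizer_iff, Subgroup.coe_map,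
      Set.forall_mem_image, SetLike.mem_coe, MulAut.conj_symm_apply, MulEquiv.coe_toMonoidHom,
      MulAut.conj_apply]
    refine forall₂_congr fun x _ => ?_
    rw [← (MulAut.conj g⁻¹).injective.eq_iff]
    simp [mul_assoc]
  rw [this, Subgroup.card_map_of_injective (MulAut.conj g).injective]

section GraphFixedPoints

variable {G H : Type*} [Group G] [Group H]

def pairFixedPoints (X : Type*) [MulAction (G × H) X] {W : Type*} [Group W] (φ : W →* G)
    (ψ : W →* H) : Set X :=
  {x | ∀ w, ((φ w, ψ w) : G × H) • x = x}

theorem rhoFun_apply (X : Type*) [MulAction (G × H) X] (t : TriE G H) :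
    rhoFun G H X t = (Nat.card (pairFixedPoints X t.2 t.1.subtype) : ℚ) /
      Nat.card (Subgroup.centralizer (t.2.range : Set G)) :=
  rfl

theorem pairFixedPoints_subtype_eq (X : Type*) [MulAction (G × H) X] (t : TriE G H) :
    pairFixedPoints X t.2 t.1.subtype = {x | ∀ p ∈ lhdOf t, p • x = x} := by
  ext x
  exact ⟨fun hx _ ⟨v, hv⟩ => hv ▸ hx v, fun hx v => hx _ ⟨v, rfl⟩⟩

theorem range_eq_map_fst_lhdOf (t : TriE G H) :
    t.2.range = (lhdOf t).map (MonoidHom.fst G H) := by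
  rw [lhdOf, MonoidHom.map_range, MonoidHom.fst_comp_prod]

theorem map_fst_map_conj (L : Subgroup (G × H)) (a : G × H) :
    (L.map (MulAut.conj a).toMonoidHom).map (MonoidHom.fst G H) =
      (L.map (MonoidHom.fst G H)).map (MulAut.conj a.1).toMonoidHom := by
  rw [Subgroup.map_map, Subgroup.map_map]
  rfl

theorem card_centralizer_dvd_card_pairFixedPoints (X : Type*) [Finite G] [Finite X]
    [MulAction (G × H) X] (hX : ∀ (x : X) (g : G), ((g, (1 : H)) : G × H) • x = x → g = 1)
    (t : TriE G H) :
    Nat.card (Subgroup.centralizer (t.2.range : Set G)) ∣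
      Nat.card (pairFixedPoints X t.2 t.1.subtype) := by
  let := MulAction.compHom X
    ((MonoidHom.inl G H).comp (Subgroup.centralizer (t.2.range : Set G)).subtype)
  refine card_dvd_card_of_free (fun c x hcx => Subtype.ext (hX x c hcx)) fun c x hx v => ?_
  have hcomm : t.2 v * c = c * t.2 v := Subgroup.mem_centralizer_iff.mp c.2 _ ⟨v, rfl⟩
  have hv : ((t.2 v, (v : H)) : G × H) • x = x := hx v
  show ((t.2 v, (v : H)) : G × H) • (((c : G), (1 : H)) : G × H) • x = ((c : G), (1 : H)) • x
  rw [smul_smul, Prod.mk_mul_mk, hcomm, mul_one, ← one_mul (v : H), ← Prod.mk_mul_mk,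
    ← smul_smul, hv]

theorem rhoFun_eq_of_map_conj_lhdOf (X : Type*) [MulAction (G × H) X] {a : G × H}
    {t t' : TriE G H} (h : (lhdOf t).map (MulAut.conj a).toMonoidHom = lhdOf t') :
    rhoFun G H X t = rhoFun G H X t' := by
  have hrange : t'.2.range = t.2.range.map (MulAut.conj a.1).toMonoidHom := by
    rw [range_eq_map_fst_lhdOf, ← h, map_fst_map_conj, ← range_eq_map_fst_lhdOf]
  have hfixed : Nat.card (pairFixedPoints X t'.2 t'.1.subtype) =
      Nat.card (pairFixedPoints X t.2 t.1.subtype) := by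
    rw [pairFixedPoints_subtype_eq, pairFixedPoints_subtype_eq, ← h, card_fixed_map_conj]
  rw [rhoFun_apply, rhoFun_apply, hfixed, hrange, Subgroup.card_centralizer_map_conj]

end GraphFixedPoints

theorem ghostMul_apply_mk {G H K : Type*} [Group G] [Group H] [Group K] [Finite G] [Finite H]
    [Finite K] (a : TriE G H → ℚ) (b : TriE H K → ℚ) (W : Subgroup K) (γ : W →* G) :
    ghostMul a b ⟨W, γ⟩ = ∑ᶠ β : W →* H, ∑ᶠ α : β.range →* G,
      if γ = α.comp β.rangeRestrict then
        (Nat.card (Subgroup.centralizer (β.range : Set H)) : ℚ) / Nat.card H *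
          a ⟨β.range, α⟩ * b ⟨W, β⟩
      else 0 := by
  have := Fintype.ofFinite (Subgroup H)
  have := Fintype.ofFinite (Subgroup K)
  have (V : Subgroup H) := Fintype.ofFinite (V →* G)
  have (V : Subgroup K) := Fintype.ofFinite (V →* H)
  simp only [ghostMul, finsum_eq_sum_of_fintype]
  rw [Finset.sum_comm, ← Finset.univ_sigma_univ, Finset.sum_sigma]
  refine (Fintype.sum_eq_single W fun V hV => ?_).trans (Finset.sum_congr rfl fun β _ => ?_)
  · refine Finset.sum_eq_zero fun β _ => Finset.sum_eq_zero fun s _ => ?_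
    split_ifs with hrange heq
    · exact absurd (congrArg Sigma.fst heq).symm hV
    all_goals rfl
  · rw [← Finset.univ_sigma_univ, Finset.sum_sigma]
    refine (Fintype.sum_eq_single β.range fun V hV => ?_).trans
      (Finset.sum_congr rfl fun α _ => ?_)
    · exact Finset.sum_eq_zero fun α _ => dif_neg fun h => hV h.symm
    · rw [dif_pos rfl]
      simp only [Sigma.mk.inj_iff, heq_eq_eq, true_and]
      rfl

section RangeRestrict

variable {G H : Type*} [Group G] [Group H] (X : Type*) [MulAction (G × H) X]
  {W : Type*} [Group W] (γ : W →* G) (β : W →* H)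

theorem pairFixedPoints_comp_of_surjective {V : Type*} [Group V] (φ : V →* G) (ψ : V →* H)
    {f : W →* V} (hf : Function.Surjective f) :
    pairFixedPoints X (φ.comp f) (ψ.comp f) = pairFixedPoints X φ ψ := by
  ext x
  exact ⟨fun hx v => by obtain ⟨w, rfl⟩ := hf v; exact hx w, fun hx w => hx (f w)⟩

theorem rhoFun_range_eq_of_eq_comp {α : β.range →* G} (hγ : γ = α.comp β.rangeRestrict) :
    rhoFun G H X ⟨β.range, α⟩ = (Nat.card (pairFixedPoints X γ β) : ℚ) /
      Nat.card (Subgroup.centralizer (γ.range : Set G)) := by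
  have hfixed : pairFixedPoints X γ β = pairFixedPoints X α β.range.subtype := by
    rw [← pairFixedPoints_comp_of_surjective X α β.range.subtype β.rangeRestrict_surjective,
      β.subtype_comp_rangeRestrict, ← hγ]
  have hrange : γ.range = α.range := by
    rw [hγ, MonoidHom.range_comp,
      MonoidHom.range_eq_top_of_surjective _ β.rangeRestrict_surjective, ← MonoidHom.range_eq_map]
  rw [rhoFun_apply, ← hfixed, ← hrange]

theorem existsUnique_eq_comp_rangeRestrict
    (hX : ∀ (x : X) (g : G), ((g, (1 : H)) : G × H) • x = x → g = 1)
    (hS : (pairFixedPoints X γ β).Nonempty) :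
    ∃! α : β.range →* G, γ = α.comp β.rangeRestrict := by
  obtain ⟨x, hx⟩ := hS
  have hker : β.rangeRestrict.ker ≤ γ.ker := fun w hw => by
    rw [MonoidHom.ker_rangeRestrict, MonoidHom.mem_ker] at hw
    have := hx w
    rw [hw] at this
    exact hX x _ this
  have hlift := MonoidHom.liftOfRightInverse_comp _ _
    (Function.rightInverse_surjInv β.rangeRestrict_surjective) ⟨γ, hker⟩
  exact ⟨_, hlift.symm, fun α hα =>
    (MonoidHom.cancel_right β.rangeRestrict_surjective).mp (hα.symm.trans hlift.symm)⟩

theorem finsum_ite_eq_comp_rangeRestrict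
    (hX : ∀ (x : X) (g : G), ((g, (1 : H)) : G × H) • x = x → g = 1) (r s : ℚ) :
    (∑ᶠ α : β.range →* G,
      if γ = α.comp β.rangeRestrict then r * rhoFun G H X ⟨β.range, α⟩ * s else 0) =
      r * ((Nat.card (pairFixedPoints X γ β) : ℚ) /
        Nat.card (Subgroup.centralizer (γ.range : Set G))) * s := by
  rcases (pairFixedPoints X γ β).eq_empty_or_nonempty with hS | hS
  · have hzero : (Nat.card (pairFixedPoints X γ β) : ℚ) = 0 := by simp [hS]
    rw [hzero, zero_div, mul_zero, zero_mul]
    refine finsum_eq_zero_of_forall_eq_zero fun α => ?_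
    split_ifs with hγ
    · rw [rhoFun_range_eq_of_eq_comp X γ β hγ, hzero, zero_div, mul_zero, zero_mul]
    · rfl
  · obtain ⟨α₀, hα₀, huniq⟩ := existsUnique_eq_comp_rangeRestrict X γ β hX hS
    rw [finsum_eq_single _ α₀ fun α hα => if_neg fun hγ => hα (huniq α hγ), if_pos hα₀,
      rhoFun_range_eq_of_eq_comp X γ β hα₀]

end RangeRestrict

abbrev tensorAction (G H K X Y : Type*) [Group G] [Group H] [Group K] [MulAction (G × H) X]
    [MulAction (H × K) Y] : MulAction H (X × Y) where
  smul h p := ((((1 : G), h) : G × H) • p.1, ((h, (1 : K)) : H × K) • p.2)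
  one_smul p := Prod.ext (one_smul (G × H) p.1) (one_smul (H × K) p.2)
  mul_smul h h' p := Prod.ext
    (show (((1 : G), h * h') : G × H) • p.1 =
        (((1 : G), h) : G × H) • (((1 : G), h') : G × H) • p.1 by
      rw [smul_smul, Prod.mk_mul_mk, one_mul])
    (show ((h * h', (1 : K)) : H × K) • p.2 =
        ((h, (1 : K)) : H × K) • ((h', (1 : K)) : H × K) • p.2 by
      rw [smul_smul, Prod.mk_mul_mk, one_mul])

section Tensor

variable {G H K : Type*} [Group G] [Group H] [Group K] {X Y : Type*} [MulAction (G × H) X]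
  [MulAction (H × K) Y]

theorem tensSetoid_eq_orbitRel :
    tensSetoid G H K X Y = @MulAction.orbitRel H (X × Y) _ (tensorAction G H K X Y) :=
  Setoid.ext fun _ _ => ⟨fun h => Setoid.symm' _ h, fun h => Setoid.symm' _ h⟩

variable (H X Y) in
def tensorFixedPairs (W : Subgroup K) (γ : W →* G) : Set (X × Y) :=
  {p | ∀ w : W, ∃ h : H, ((γ w, h) : G × H) • p.1 = p.1 ∧ ((h, (w : K)) : H × K) • p.2 = p.2}

variable (H X Y) in
def tensorFixedClasses (W : Subgroup K) (γ : W →* G) : Set (Quotient (tensSetoid G H K X Y)) :=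
  {q | ∀ (w : W) (x : X) (y : Y), Quotient.mk _ (x, y) = q →
    Quotient.mk _ (((γ w, (1 : H)) : G × H) • x, (((1 : H), (w : K)) : H × K) • y) = q}

theorem mk_mem_tensorFixedClasses_iff {W : Subgroup K} {γ : W →* G} (p : X × Y) :
    Quotient.mk (tensSetoid G H K X Y) p ∈ tensorFixedClasses H X Y W γ ↔
      p ∈ tensorFixedPairs H X Y W γ := by
  constructor
  · intro hp w
    obtain ⟨h, hh⟩ := Quotient.exact (hp w p.1 p.2 rfl)
    simp only [smul_smul, Prod.mk_mul_mk, one_mul, mul_one, Prod.ext_iff] at hh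
    exact ⟨h, hh⟩
  · intro hp w x y hxy
    obtain ⟨h₀, rfl⟩ := Quotient.exact hxy
    obtain ⟨h, hx, hy⟩ := hp w
    refine Quotient.sound ⟨h * h₀, ?_⟩
    simp only [smul_smul, Prod.mk_mul_mk, one_mul, mul_one] at hx hy ⊢
    exact Prod.ext hx hy

theorem eq_of_smul_eq_self_of_leftFree
    (hY : ∀ (y : Y) (h : H), ((h, (1 : K)) : H × K) • y = y → h = 1) {y : Y} {k : K} {h h' : H}
    (hh : ((h, k) : H × K) • y = y) (hh' : ((h', k) : H × K) • y = y) : h = h' := by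
  have : ((h'⁻¹ * h, k⁻¹ * k) : H × K) • y = y := by
    rw [← Prod.mk_mul_mk, ← smul_smul, hh, ← Prod.inv_mk, inv_smul_eq_iff, hh']
  rw [inv_mul_cancel] at this
  exact (inv_mul_eq_one.mp (hY y _ this)).symm

theorem tensorFixedPairs_eq_iUnion
    (hY : ∀ (y : Y) (h : H), ((h, (1 : K)) : H × K) • y = y → h = 1) (W : Subgroup K)
    (γ : W →* G) :
    tensorFixedPairs H X Y W γ =
      ⋃ β : W →* H, pairFixedPoints X γ β ×ˢ pairFixedPoints Y β W.subtype := by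
  ext ⟨x, y⟩
  simp only [tensorFixedPairs, Set.mem_ofPred_eq, Set.mem_iUnion, Set.mem_prod]
  constructor
  · intro hp
    choose f hfx hfy using hp
    have hf (w : W) {h : H} (hh : ((h, (w : K)) : H × K) • y = y) : f w = h :=
      eq_of_smul_eq_self_of_leftFree hY (hfy w) hh
    refine ⟨{ toFun := f, map_one' := hf 1 (one_smul _ y), map_mul' := fun w w' => hf _ ?_ },
      hfx, hfy⟩
    rw [Subgroup.coe_mul, ← Prod.mk_mul_mk, ← smul_smul, hfy, hfy]
  · rintro ⟨β, hx, hy⟩ w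
    exact ⟨β w, hx w, hy w⟩

theorem card_tensorFixedPairs [Finite H] [Finite K] [Finite X] [Finite Y]
    (hY : ∀ (y : Y) (h : H), ((h, (1 : K)) : H × K) • y = y → h = 1) (W : Subgroup K)
    (γ : W →* G) :
    Nat.card (tensorFixedPairs H X Y W γ) =
      ∑ᶠ β : W →* H,
        Nat.card (pairFixedPoints X γ β) * Nat.card (pairFixedPoints Y β W.subtype) := by
  have := Fintype.ofFinite (W →* H)
  have hdisj : Pairwise (Function.onFun Disjoint
      fun β : W →* H => pairFixedPoints X γ β ×ˢ pairFixedPoints Y β W.subtype) :=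
    fun β β' hne => Set.disjoint_left.mpr fun p hp hp' => hne <|
      MonoidHom.ext fun w => eq_of_smul_eq_self_of_leftFree hY (hp.2 w) (hp'.2 w)
  rw [tensorFixedPairs_eq_iUnion hY, Nat.card_congr (Set.unionEqSigmaOfDisjoint hdisj),
    Nat.card_sigma, finsum_eq_sum_of_fintype]
  exact Finset.sum_congr rfl fun β _ => by rw [Nat.card_congr (Equiv.Set.prod _ _), Nat.card_prod]

theorem card_tensorFixedClasses_mul_card [Finite H] [Finite X] [Finite Y]
    (hY : ∀ (y : Y) (h : H), ((h, (1 : K)) : H × K) • y = y → h = 1) (W : Subgroup K)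
    (γ : W →* G) :
    Nat.card (tensorFixedClasses H X Y W γ) * Nat.card H =
      Nat.card (tensorFixedPairs H X Y W γ) := by
  let := tensorAction G H K X Y
  rw [← card_preimage_mk_of_free (fun h p hp => hY p.2 h (congrArg Prod.snd hp))
    tensSetoid_eq_orbitRel]
  exact Nat.card_congr (Equiv.setCongr (Set.ext mk_mem_tensorFixedClasses_iff))

end Tensor

theorem rhoProd_eq_ghostMul {G H K : Type*} [Group G] [Group H] [Group K] [Finite G] [Finite H]
    [Finite K] (X Y : Type*) [Finite X] [Finite Y] [MulAction (G × H) X] [MulAction (H × K) Y]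
    (hX : ∀ (x : X) (g : G), ((g, (1 : H)) : G × H) • x = x → g = 1)
    (hY : ∀ (y : Y) (h : H), ((h, (1 : K)) : H × K) • y = y → h = 1) :
    rhoProd G H K X Y = ghostMul (rhoFun G H X) (rhoFun H K Y) := by
  funext ⟨W, γ⟩
  have hH : (Nat.card H : ℚ) ≠ 0 := Nat.cast_ne_zero.mpr Nat.card_pos.ne'
  have hcount : (Nat.card (tensorFixedClasses H X Y W γ) : ℚ) = (∑ᶠ β : W →* H,
      (Nat.card (pairFixedPoints X γ β) : ℚ) * Nat.card (pairFixedPoints Y β W.subtype)) /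
        Nat.card H := by
    rw [eq_div_iff hH, ← Nat.cast_mul, card_tensorFixedClasses_mul_card hY,
      card_tensorFixedPairs hY, Nat.cast_finsum]
    simp only [Nat.cast_mul]
  rw [ghostMul_apply_mk]
  calc rhoProd G H K X Y ⟨W, γ⟩
      = (Nat.card (tensorFixedClasses H X Y W γ) : ℚ) /
          Nat.card (Subgroup.centralizer (γ.range : Set G)) := rfl
    _ = ∑ᶠ β : W →* H, (Nat.card (Subgroup.centralizer (β.range : Set H)) : ℚ) / Nat.card H *
          ((Nat.card (pairFixedPoints X γ β) : ℚ) /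
            Nat.card (Subgroup.centralizer (γ.range : Set G))) *
          ((Nat.card (pairFixedPoints Y β W.subtype) : ℚ) /
            Nat.card (Subgroup.centralizer (β.range : Set H))) := by
      rw [hcount, div_div, div_eq_mul_inv, finsum_mul]
      refine finsum_congr fun β => ?_
      have : (Nat.card (Subgroup.centralizer (β.range : Set H)) : ℚ) ≠ 0 :=
        Nat.cast_ne_zero.mpr Nat.card_pos.ne'
      field_simp
    _ = _ := finsum_congr fun β => (finsum_ite_eq_comp_rangeRestrict X γ β hX _ _).symm

/-- for left-free bisets `X` (a `(G,H)`-biset) and `Y` (an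
`(H,K)`-biset): each fixed point number `|X^{⊲(U,α,V)}|` is divisible by
`|C_G(U)|`; the function `ρ(X)` is fixed by the `G × H`-action (constant on
conjugation orbits of triples, detected via graphs); and
`ρ(X ×_H Y) = ρ(X) ·_H ρ(Y)`. -/
theorem stmt11 {G H K : Type*} [Group G] [Group H] [Group K]
    [Finite G] [Finite H] [Finite K]
    (X Y : Type*) [Finite X] [Finite Y] [MulAction (G × H) X] [MulAction (H × K) Y]
    (hX : ∀ (x : X) (g : G), ((g, (1 : H)) : G × H) • x = x → g = 1)
    (hY : ∀ (y : Y) (h : H), ((h, (1 : K)) : H × K) • y = y → h = 1) :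
    (∀ t : TriE G H,
      Nat.card ↥(Subgroup.centralizer ((t.2.range : Subgroup G) : Set G)) ∣
        Nat.card {x : X | ∀ v : ↥t.1, ((t.2 v, (v : H)) : G × H) • x = x}) ∧
    (∀ (a : G × H) (t t' : TriE G H),
      Subgroup.map (MulAut.conj a).toMonoidHom (lhdOf t) = lhdOf t' →
        rhoFun G H X t = rhoFun G H X t') ∧
    rhoProd G H K X Y = ghostMul (rhoFun G H X) (rhoFun H K Y) :=
  ⟨card_centralizer_dvd_card_pairFixedPoints X hX,
    fun _ _ _ h => rhoFun_eq_of_map_conj_lhdOf X h, rhoProd_eq_ghostMul X Y hX hY⟩
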